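/- arXiv:2312.17691 — 3 statements merged into one kernel-verified Lean document; each statement's English description precedes it below -/
import Mathlib

section
/- For each integer k ≥ 1, define φ_k : ℝ → ℝ by φ_k(x) = ln(1 + |x|³(3x²/(5k²) − 3|x|/(2k) + 1)) for |x| ≤ k and φ_k(x) = ln(1 + k³/10) for |x| > k. Then: (i) each φ_k is nonnegative and twice continuously differentiable on ℝ; (ii) there exists a constant C, independent of k, such that |φ_k′(x)| ≤ C and |φ_k″(x)| ≤ C for all x ∈ ℝ and all k ≥ 1; (iii) for each fixed x ∈ ℝ, the sequence (φ_k(x))_{k≥1} is nondecreasing in k and converges to ln(1 + |x|³) as k → ∞. -/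
/-!
On `|x| ≤ k` we have `φ_k = log P_k`, where `P_k(x) = 1 + |x|³ - 3x⁴/(2k) + 3|x|⁵/(5k²)`
is `C²` because `x ↦ x|x|` is `C¹`. Its derivatives `P_k' = 3x|x|(1 - |x|/k)²` and
`P_k'' = 6|x|(1 - |x|/k)(1 - 2|x|/k)` vanish at `|x| = k`, where `P_k = 1 + k³/10`, so continuing
`φ_k` by a constant keeps it `C²`. On `|x| ≤ k` the identity
`P_k - (1 + |x|³/10) = 3|x|³(k - |x|)(3k - 2|x|)/(10k²)` gives `P_k ≥ 1 + |x|³/10`, while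
`|P_k'| ≤ 3x²` and `|P_k''| ≤ 6|x|`; hence `φ_k' = P_k'/P_k` and
`φ_k'' = P_k''/P_k - (P_k'/P_k)²` are bounded independently of `k`.
-/

open Filter Asymptotics Topology

/-- The truncated-logarithmic test functions of the compactness lemma. -/
noncomputable def phiTest (k : ℕ) (x : ℝ) : ℝ :=
  if |x| ≤ (k : ℝ) then
    Real.log (1 + |x| ^ 3 * (3 * x ^ 2 / (5 * (k : ℝ) ^ 2) - 3 * |x| / (2 * (k : ℝ)) + 1))
  else Real.log (1 + (k : ℝ) ^ 3 / 10)

section Gluing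

variable {𝕜 F : Type*} [NontriviallyNormedField 𝕜] [NormedAddCommGroup F] [NormedSpace 𝕜 F]

theorem HasDerivAt.ite_const_of_eq {p : 𝕜 → Prop} [DecidablePred p] {G : 𝕜 → F} {c : F}
    {x : 𝕜} (hG : HasDerivAt G 0 x) (hGx : G x = c) :
    HasDerivAt (fun y => if p y then G y else c) 0 x := by
  rw [hasDerivAt_iff_isLittleO] at hG ⊢
  simp only [smul_zero, sub_zero] at hG ⊢
  refine (IsBigO.of_bound 1 (Eventually.of_forall fun y => ?_)).trans_isLittleO hG
  split_ifs <;> simp [hGx]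

theorem hasDerivAt_ite_const {p : 𝕜 → Prop} [DecidablePred p] (hp : IsClosed {y | p y})
    {G G' : 𝕜 → F} {c : F} (hG : ∀ x, p x → HasDerivAt G (G' x) x)
    (hfrontier : ∀ x ∈ frontier {y | p y}, G x = c ∧ G' x = 0) (x : 𝕜) :
    HasDerivAt (fun y => if p y then G y else c) (if p x then G' x else 0) x := by
  by_cases hint : x ∈ interior {y | p y}
  · have hpx : p x := interior_subset hint
    rw [if_pos hpx]
    refine (hG x hpx).congr_of_eventuallyEq ?_
    filter_upwards [mem_interior_iff_mem_nhds.mp hint] with y hy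
    simp [show p y from hy]
  by_cases hpx : p x
  · obtain ⟨hGx, hG'x⟩ := hfrontier x ⟨subset_closure hpx, hint⟩
    rw [if_pos hpx, hG'x]
    exact (hG'x ▸ hG x hpx).ite_const_of_eq hGx
  · rw [if_neg hpx]
    refine (hasDerivAt_const x c).congr_of_eventuallyEq ?_
    filter_upwards [hp.isOpen_compl.mem_nhds hpx] with y hy
    simp [show ¬ p y from hy]

end Gluing

theorem hasDerivAt_mul_abs (x : ℝ) : HasDerivAt (fun y => y * |y|) (2 * |x|) x := by
  rcases eq_or_ne x 0 with rfl | hx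
  · rw [hasDerivAt_iff_isLittleO_nhds_zero]
    simp only [zero_add, abs_zero, mul_zero, smul_zero, sub_zero]
    refine (IsBigO.of_bound 1 (Eventually.of_forall fun h => ?_)).trans_isLittleO
      (isLittleO_pow_id one_lt_two)
    simp [sq]
  · refine ((hasDerivAt_id x).mul (hasDerivAt_abs hx)).congr_deriv ?_
    rw [id, self_mul_sign]
    ring

noncomputable def phiArg (k x : ℝ) : ℝ :=
  1 + |x| ^ 3 * (3 * x ^ 2 / (5 * k ^ 2) - 3 * |x| / (2 * k) + 1)

noncomputable def phiArgDeriv (k x : ℝ) : ℝ :=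
  3 * x * |x| * (1 - |x| / k) ^ 2

noncomputable def phiArgDeriv2 (k x : ℝ) : ℝ :=
  6 * |x| * (1 - |x| / k) * (1 - 2 * |x| / k)

theorem hasDerivAt_phiArg (k x : ℝ) : HasDerivAt (phiArg k) (phiArgDeriv k x) x := by
  have hform : phiArg k = fun y =>
      1 + y * (y * |y|) + 3 / (5 * k ^ 2) * (y ^ 3 * (y * |y|)) - 3 / (2 * k) * y ^ 4 := by
    funext y
    rcases abs_choice y with h | h <;> rw [phiArg, h] <;> ring
  have hA := hasDerivAt_mul_abs x
  rw [hform]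
  refine ((((hasDerivAt_id x).mul hA).const_add 1).add
    (((hasDerivAt_pow 3 x).mul hA).const_mul _)).sub
      ((hasDerivAt_pow 4 x).const_mul _) |>.congr_deriv ?_
  rcases abs_choice x with h | h <;> rw [phiArgDeriv, h] <;> norm_num <;> ring

theorem hasDerivAt_phiArgDeriv (k x : ℝ) :
    HasDerivAt (phiArgDeriv k) (phiArgDeriv2 k x) x := by
  have hform : phiArgDeriv k = fun y =>
      3 * (y * |y|) - 6 / k * y ^ 3 + 3 / k ^ 2 * (y ^ 2 * (y * |y|)) := by
    funext y
    rcases abs_choice y with h | h <;> rw [phiArgDeriv, h] <;> ring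
  have hA := hasDerivAt_mul_abs x
  rw [hform]
  refine ((hA.const_mul 3).sub ((hasDerivAt_pow 3 x).const_mul _)).add
    (((hasDerivAt_pow 2 x).mul hA).const_mul _) |>.congr_deriv ?_
  rcases abs_choice x with h | h <;> rw [phiArgDeriv2, h] <;> norm_num <;> ring

section PhiArgEstimates

variable {k x : ℝ}

theorem one_add_abs_pow_div_le_phiArg (hk : 0 < k) (hx : |x| ≤ k) :
    1 + |x| ^ 3 / 10 ≤ phiArg k x := by
  have hgap : phiArg k x - (1 + |x| ^ 3 / 10) =
      3 * |x| ^ 3 * (k - |x|) * (3 * k - 2 * |x|) / (10 * k ^ 2) := by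
    rw [phiArg, ← sq_abs x]
    field_simp
    ring
  rw [← sub_nonneg, hgap]
  have := abs_nonneg x
  exact div_nonneg (mul_nonneg (mul_nonneg (by positivity) (by linarith)) (by linarith))
    (by positivity)

theorem phiArg_pos (hk : 0 < k) (hx : |x| ≤ k) : 0 < phiArg k x :=
  lt_of_lt_of_le (by positivity) (one_add_abs_pow_div_le_phiArg hk hx)

theorem abs_phiArgDeriv_le (hk : 0 < k) (hx : |x| ≤ k) : |phiArgDeriv k x| ≤ 3 * |x| ^ 2 := by
  have h0 : 0 ≤ 1 - |x| / k := by rw [sub_nonneg, div_le_one hk]; exact hx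
  have h1 : (1 - |x| / k) ^ 2 ≤ 1 :=
    pow_le_one₀ h0 (by linarith [div_nonneg (abs_nonneg x) hk.le])
  calc |phiArgDeriv k x| = 3 * |x| ^ 2 * (1 - |x| / k) ^ 2 := by
        rw [phiArgDeriv, abs_mul, abs_mul, abs_mul, abs_abs,
          abs_of_nonneg (sq_nonneg (1 - |x| / k)), abs_of_pos three_pos]
        ring
    _ ≤ 3 * |x| ^ 2 * 1 := by gcongr
    _ = 3 * |x| ^ 2 := mul_one _

theorem abs_phiArgDeriv2_le (hk : 0 < k) (hx : |x| ≤ k) : |phiArgDeriv2 k x| ≤ 6 * |x| := by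
  have hr : 0 ≤ |x| / k := div_nonneg (abs_nonneg x) hk.le
  have hr1 : |x| / k ≤ 1 := (div_le_one hk).mpr hx
  calc |phiArgDeriv2 k x| = 6 * |x| * |1 - |x| / k| * |1 - 2 * |x| / k| := by
        rw [phiArgDeriv2, abs_mul, abs_mul, abs_mul, abs_abs]
        norm_num
    _ ≤ 6 * |x| * 1 * 1 := by
        gcongr
        · exact abs_le.mpr ⟨by linarith, by linarith⟩
        · rw [mul_div_assoc]; exact abs_le.mpr ⟨by linarith, by linarith⟩
    _ = 6 * |x| := by ring

theorem abs_phiArgDeriv_div_le (hk : 0 < k) (hx : |x| ≤ k) :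
    |phiArgDeriv k x / phiArg k x| ≤ 30 := by
  have hP := one_add_abs_pow_div_le_phiArg hk hx
  have hpos := phiArg_pos hk hx
  have hD := abs_phiArgDeriv_le hk hx
  have ht := abs_nonneg x
  rw [abs_div, abs_of_pos hpos, div_le_iff₀ hpos]
  nlinarith [mul_nonneg ht (sq_nonneg (|x| - 1))]

theorem abs_phiArgDeriv2_div_le (hk : 0 < k) (hx : |x| ≤ k) :
    |phiArgDeriv2 k x / phiArg k x| ≤ 60 := by
  have hP := one_add_abs_pow_div_le_phiArg hk hx
  have hpos := phiArg_pos hk hx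
  have hD := abs_phiArgDeriv2_le hk hx
  have ht := abs_nonneg x
  rw [abs_div, abs_of_pos hpos, div_le_iff₀ hpos]
  nlinarith [mul_nonneg ht (sq_nonneg (|x| - 1))]

theorem phiArg_le_phiArg {l : ℝ} (hk : 0 < k) (hx : |x| ≤ k) (hkl : k ≤ l) :
    phiArg k x ≤ phiArg l x := by
  have hl : 0 < l := hk.trans_le hkl
  have hgap : phiArg l x - phiArg k x =
      (l - k) * |x| ^ 4 * (15 * k * l - 6 * |x| * (k + l)) / (10 * k ^ 2 * l ^ 2) := by
    rw [phiArg, phiArg, ← sq_abs x]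
    field_simp
    ring
  rw [← sub_nonneg, hgap]
  have := abs_nonneg x
  refine div_nonneg (mul_nonneg (mul_nonneg (by linarith) (by positivity)) ?_) (by positivity)
  nlinarith [mul_le_mul_of_nonneg_left hx hl.le, mul_le_mul_of_nonneg_left (hx.trans hkl) hk.le]

theorem phiArg_of_abs_eq (hk : k ≠ 0) (hx : |x| = k) : phiArg k x = 1 + k ^ 3 / 10 := by
  rw [phiArg, ← sq_abs x, hx]
  field_simp
  ring

theorem phiArgDeriv_of_abs_eq (hk : k ≠ 0) (hx : |x| = k) : phiArgDeriv k x = 0 := by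
  simp [phiArgDeriv, hx, hk]

theorem phiArgDeriv2_of_abs_eq (hk : k ≠ 0) (hx : |x| = k) :
    phiArgDeriv2 k x = 0 := by
  simp [phiArgDeriv2, hx, hk]

end PhiArgEstimates

theorem phiTest_eq_ite (k : ℕ) (x : ℝ) :
    phiTest k x =
      if |x| ≤ (k : ℝ) then Real.log (phiArg k x) else Real.log (1 + (k : ℝ) ^ 3 / 10) :=
  rfl

noncomputable def phiTestDeriv (k : ℕ) (x : ℝ) : ℝ :=
  if |x| ≤ (k : ℝ) then phiArgDeriv k x / phiArg k x else 0

noncomputable def phiTestDeriv2 (k : ℕ) (x : ℝ) : ℝ :=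
  if |x| ≤ (k : ℝ) then
    phiArgDeriv2 k x / phiArg k x - (phiArgDeriv k x / phiArg k x) ^ 2
  else 0

section PhiTest

variable {k : ℕ} (hk : 0 < k)
include hk

theorem hasDerivAt_phiTest (x : ℝ) : HasDerivAt (phiTest k) (phiTestDeriv k x) x := by
  have hk' : (0 : ℝ) < k := Nat.cast_pos.mpr hk
  refine hasDerivAt_ite_const (isClosed_le continuous_abs continuous_const)
    (fun y hy => (hasDerivAt_phiArg k y).log (phiArg_pos hk' hy).ne') (fun y hy => ?_) x
  have hy := frontier_le_subset_eq continuous_abs continuous_const hy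
  simp [phiArg_of_abs_eq hk'.ne' hy, phiArgDeriv_of_abs_eq hk'.ne' hy]

theorem hasDerivAt_phiTestDeriv (x : ℝ) :
    HasDerivAt (phiTestDeriv k) (phiTestDeriv2 k x) x := by
  have hk' : (0 : ℝ) < k := Nat.cast_pos.mpr hk
  unfold phiTestDeriv phiTestDeriv2
  refine hasDerivAt_ite_const (G := fun y => phiArgDeriv k y / phiArg k y)
    (G' := fun y => phiArgDeriv2 k y / phiArg k y - (phiArgDeriv k y / phiArg k y) ^ 2)
    (isClosed_le continuous_abs continuous_const)
    (fun y hy => ((hasDerivAt_phiArgDeriv k y).div (hasDerivAt_phiArg k y)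
      (phiArg_pos hk' hy).ne').congr_deriv ?_) (fun y hy => ?_) x
  · field_simp
  · have hy := frontier_le_subset_eq continuous_abs continuous_const hy
    simp [phiArgDeriv_of_abs_eq hk'.ne' hy, phiArgDeriv2_of_abs_eq hk'.ne' hy]

theorem deriv_phiTest : deriv (phiTest k) = phiTestDeriv k :=
  funext fun x => (hasDerivAt_phiTest hk x).deriv

theorem deriv_phiTestDeriv : deriv (phiTestDeriv k) = phiTestDeriv2 k :=
  funext fun x => (hasDerivAt_phiTestDeriv hk x).deriv

theorem continuous_phiTestDeriv2 : Continuous (phiTestDeriv2 k) := by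
  have hk' : (0 : ℝ) < k := Nat.cast_pos.mpr hk
  have hP : ContinuousOn (phiArg k) {x | |x| ≤ k} := by unfold phiArg; fun_prop
  have hD : ContinuousOn (phiArgDeriv k) {x | |x| ≤ k} := by unfold phiArgDeriv; fun_prop
  have hD2 : ContinuousOn (phiArgDeriv2 k) {x | |x| ≤ k} := by unfold phiArgDeriv2; fun_prop
  have hne : ∀ x ∈ {x : ℝ | |x| ≤ k}, phiArg k x ≠ 0 :=
    fun x hx => (phiArg_pos hk' hx).ne'
  refine continuous_if_le continuous_abs continuous_const
    ((hD2.div hP hne).sub ((hD.div hP hne).pow 2)) continuousOn_const fun x hx => ?_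
  simp [phiArgDeriv_of_abs_eq hk'.ne' hx, phiArgDeriv2_of_abs_eq hk'.ne' hx]

theorem contDiff_phiTest : ContDiff ℝ 2 (phiTest k) := by
  rw [show (2 : WithTop ℕ∞) = 1 + 1 from rfl, contDiff_succ_iff_deriv, deriv_phiTest hk,
    contDiff_one_iff_deriv, deriv_phiTestDeriv hk]
  exact ⟨fun x => (hasDerivAt_phiTest hk x).differentiableAt, by simp,
    fun x => (hasDerivAt_phiTestDeriv hk x).differentiableAt, continuous_phiTestDeriv2 hk⟩

theorem abs_phiTestDeriv_le (x : ℝ) : |phiTestDeriv k x| ≤ 30 := by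
  unfold phiTestDeriv
  split_ifs with hx
  · exact abs_phiArgDeriv_div_le (Nat.cast_pos.mpr hk) hx
  · norm_num

theorem abs_phiTestDeriv2_le (x : ℝ) : |phiTestDeriv2 k x| ≤ 960 := by
  unfold phiTestDeriv2
  split_ifs with hx
  · have h1 := abs_phiArgDeriv2_div_le (Nat.cast_pos.mpr hk) hx
    have h2 := abs_phiArgDeriv_div_le (Nat.cast_pos.mpr hk) hx
    calc |phiArgDeriv2 k x / phiArg k x - (phiArgDeriv k x / phiArg k x) ^ 2|
        ≤ |phiArgDeriv2 k x / phiArg k x| + |phiArgDeriv k x / phiArg k x| ^ 2 := by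
          rw [← abs_pow]
          exact abs_sub _ _
      _ ≤ 60 + 30 ^ 2 := by gcongr
      _ = 960 := by norm_num
  · norm_num

theorem phiTest_nonneg (x : ℝ) : 0 ≤ phiTest k x := by
  have hk' : (0 : ℝ) < k := Nat.cast_pos.mpr hk
  rw [phiTest_eq_ite]
  split_ifs with hx
  · exact Real.log_nonneg <| by
      linarith [one_add_abs_pow_div_le_phiArg hk' hx, pow_nonneg (abs_nonneg x) 3]
  · exact Real.log_nonneg <| by linarith [pow_pos hk' 3]

theorem phiTest_mono {l : ℕ} (hkl : k ≤ l) (x : ℝ) : phiTest k x ≤ phiTest l x := by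
  have hk' : (0 : ℝ) < k := Nat.cast_pos.mpr hk
  have hkl' : (k : ℝ) ≤ l := Nat.cast_le.mpr hkl
  have hl' : (0 : ℝ) < l := hk'.trans_le hkl'
  rw [phiTest_eq_ite, phiTest_eq_ite]
  split_ifs with hxk hxl hxl
  · exact Real.log_le_log (phiArg_pos hk' hxk) (phiArg_le_phiArg hk' hxk hkl')
  · exact absurd (hxk.trans hkl') hxl
  · refine Real.log_le_log (by positivity) ?_
    have := pow_le_pow_left₀ hk'.le (not_le.mp hxk).le 3
    linarith [one_add_abs_pow_div_le_phiArg hl' hxl]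
  · exact Real.log_le_log (by positivity) (by gcongr)

end PhiTest

theorem tendsto_phiTest (x : ℝ) :
    Tendsto (fun k : ℕ => phiTest k x) atTop (𝓝 (Real.log (1 + |x| ^ 3))) := by
  have hk : Tendsto (fun k : ℕ => (k : ℝ)) atTop atTop := tendsto_natCast_atTop_atTop
  have harg : Tendsto (fun k : ℕ => phiArg k x) atTop (𝓝 (1 + |x| ^ 3)) := by
    have h1 := (tendsto_const_nhds (x := 3 * x ^ 2)).div_atTop
      (((tendsto_pow_atTop two_ne_zero).comp hk).const_mul_atTop (by norm_num : (0 : ℝ) < 5))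
    have h2 := (tendsto_const_nhds (x := 3 * |x|)).div_atTop (hk.const_mul_atTop two_pos)
    simpa [phiArg] using tendsto_const_nhds.add (tendsto_const_nhds.mul
      ((h1.sub h2).add (tendsto_const_nhds (x := (1 : ℝ)))))
  refine ((Real.continuousAt_log (by positivity)).tendsto.comp harg).congr' ?_
  filter_upwards [eventually_ge_atTop ⌈|x|⌉₊] with k hk
  simp [phiTest_eq_ite, Nat.ceil_le.mp hk]

/-- The functions `φ_k` are nonnegative, `C²`, have first and second derivatives
bounded by a constant independent of `k`, and increase pointwise to `ln(1+|x|³)`. -/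
theorem stmt_6 :
    (∀ k : ℕ, 1 ≤ k → (∀ x : ℝ, 0 ≤ phiTest k x) ∧ ContDiff ℝ 2 (phiTest k)) ∧
    (∃ C : ℝ, ∀ k : ℕ, 1 ≤ k → ∀ x : ℝ,
        |deriv (phiTest k) x| ≤ C ∧ |deriv (deriv (phiTest k)) x| ≤ C) ∧
    (∀ x : ℝ,
        (∀ k l : ℕ, 1 ≤ k → k ≤ l → phiTest k x ≤ phiTest l x) ∧
        Filter.Tendsto (fun k : ℕ => phiTest k x) Filter.atTop
          (nhds (Real.log (1 + |x| ^ 3)))) := by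
  refine ⟨fun k hk => ⟨phiTest_nonneg hk, contDiff_phiTest hk⟩, ⟨960, fun k hk x => ?_⟩,
    fun x => ⟨fun k l hk hkl => phiTest_mono hk hkl x, tendsto_phiTest x⟩⟩
  rw [deriv_phiTest hk, deriv_phiTestDeriv hk]
  exact ⟨(abs_phiTestDeriv_le hk x).trans (by norm_num), abs_phiTestDeriv2_le hk x⟩
end

section
/- Let T > 0, k, θ, δ > 0, and write Ō = [0,∞). Let ν̂_0 be a finite positive measure on Ō, μ̂ a finite positive measure on [0,T] × Ō, and (m̂_t)_{t∈[0,T]} a measurable family of finite positive measures on Ō with ∫_0^T ∫_Ō (1 + x) m̂_t(dx) dt < ∞. Suppose that for every bounded function u : [0,T] × Ō → ℝ that is C¹ in t and C² in x with bounded derivatives ∂_t u, ∂_x u, ∂²_{xx} u, the linear programming constraint ∫_Ō u(0,x) ν̂_0(dx) + ∫_0^T ∫_Ō [∂_t u(t,x) + k(θ − x)∂_x u(t,x) + (δ²x/2)∂²_{xx} u(t,x)] m̂_t(dx) dt = ∫_{[0,T]×Ō} u(t,x) μ̂(dt,dx) holds. Then m̂_t(Ō) ≤ ν̂_0(Ō)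 for Lebesgue-almost every t ∈ [0,T]. -/
open MeasureTheory Set Filter Topology
open scoped ContDiff

/-!
Test the constraint with `u(t, x) = ∫_t^T f(s) ds` for a nonnegative compactly supported `f`:
`u` does not depend on `x`, so the generator annihilates it, `∂ₜu = -f`, and the `μ̂`-term is
nonnegative. This gives `∫_0^T m̂_t(Ō) f(t) dt ≤ ν̂_0(Ō) ∫ f`, and taking for `f` mollifiers
concentrating at a point turns it into the pointwise bound at every Lebesgue point.
-/

theorem ae_le_of_integral_contDiff_mul_le {G : Type*} [NormedAddCommGroup G] [NormedSpace ℝ G]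
    [FiniteDimensional ℝ G] [MeasurableSpace G] [BorelSpace G] {μ : Measure G}
    [μ.IsAddHaarMeasure] {g : G → ℝ} (hg : LocallyIntegrable g μ) {c : ℝ}
    (h : ∀ f : G → ℝ, ContDiff ℝ ∞ f → HasCompactSupport f → (∀ x, 0 ≤ f x) →
      ∫ x, g x * f x ∂μ ≤ c * ∫ x, f x ∂μ) :
    ∀ᵐ x ∂μ, g x ≤ c := by
  let φ : ℕ → ContDiffBump (0 : G) := fun n =>
    ⟨1 / (n + 1), 2 * (1 / (n + 1)), by positivity,
      by linarith [Nat.one_div_pos_of_nat (α := ℝ) (n := n)]⟩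
  have hφ : Tendsto (fun n => (φ n).rOut) atTop (𝓝 0) := by
    simpa only [mul_zero] using tendsto_one_div_add_atTop_nhds_zero_nat.const_mul (2 : ℝ)
  filter_upwards [ContDiffBump.ae_convolution_tendsto_right_of_locallyIntegrable hφ (K := 2)
    (Eventually.of_forall fun n => le_rfl) hg] with x hx
  refine le_of_tendsto' hx fun n => ?_
  have hbump := h (fun t => (φ n).normed μ (x - t))
    ((φ n).contDiff_normed.comp (contDiff_const.sub contDiff_id))
    ((φ n).hasCompactSupport_normed.comp_homeomorph (Homeomorph.subLeft x))
    fun t => (φ n).nonneg_normed _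
  rw [integral_sub_left_eq_self, ContDiffBump.integral_normed, mul_one] at hbump
  simpa only [convolution_eq_swap, ContinuousLinearMap.lsmul_apply, smul_eq_mul, mul_comm]
    using hbump

theorem norm_intervalIntegral_le_integral_norm {E : Type*} [NormedAddCommGroup E]
    [NormedSpace ℝ E] {f : ℝ → E} (hf : Integrable f) (a b : ℝ) :
    ‖∫ x in a..b, f x‖ ≤ ∫ x, ‖f x‖ :=
  intervalIntegral.norm_integral_le_integral_norm_uIoc.trans
    (setIntegral_le_integral hf.norm (ae_of_all _ fun _ => norm_nonneg _))

theorem measure_Ici_le_setLIntegral_one_add (ν : Measure ℝ) :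
    ν (Ici 0) ≤ ∫⁻ x in Ici 0, ENNReal.ofReal (1 + x) ∂ν :=
  calc ν (Ici 0) = ∫⁻ _ in Ici 0, 1 ∂ν := (setLIntegral_one _).symm
    _ ≤ _ := setLIntegral_mono' measurableSet_Ici fun x hx => by
      simpa [ENNReal.one_le_ofReal] using hx

theorem setIntegral_mul_le_of_forall_contDiff_eq {α : Type*} [MeasurableSpace α]
    {μ : Measure (ℝ × α)} {s : Set α} (hs : MeasurableSet s) {T c : ℝ} (hc : 0 ≤ c)
    {g : ℝ → ℝ}
    (hconstraint : ∀ u : ℝ → ℝ, ContDiff ℝ 1 u → (∃ C, ∀ t, |u t| ≤ C ∧ |deriv u t| ≤ C) →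
      c * u 0 + ∫ t in Icc 0 T, g t * deriv u t = ∫ p in Icc 0 T ×ˢ s, u p.1 ∂μ)
    {f : ℝ → ℝ} (hf : Continuous f) (hfc : HasCompactSupport f) (hf0 : ∀ t, 0 ≤ f t) :
    ∫ t in Icc 0 T, g t * f t ≤ c * ∫ t, f t := by
  have hfi : Integrable f := hf.integrable_of_hasCompactSupport hfc
  set F : ℝ → ℝ := fun t => ∫ x in t..T, f x
  have hF : ∀ t, HasDerivAt F (-f t) t := fun t =>
    intervalIntegral.integral_hasDerivAt_left hfi.intervalIntegrable
      (hf.stronglyMeasurableAtFilter _ _) hf.continuousAt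
  have hderiv : deriv F = fun t => -f t := funext fun t => (hF t).deriv
  have hF1 : ContDiff ℝ 1 F := contDiff_one_iff_deriv.2
    ⟨fun t => (hF t).differentiableAt, by rw [hderiv]; exact hf.neg⟩
  obtain ⟨M, hM⟩ := hfc.exists_bound_of_continuous hf
  have hbound : ∃ C, ∀ t, |F t| ≤ C ∧ |deriv F t| ≤ C :=
    ⟨max (∫ x, ‖f x‖) M, fun t =>
      ⟨(norm_intervalIntegral_le_integral_norm hfi t T).trans (le_max_left _ _), by
        rw [hderiv, abs_neg]; exact (hM t).trans (le_max_right _ _)⟩⟩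
  have hid := hconstraint F hF1 hbound
  simp only [hderiv, mul_neg, integral_neg] at hid
  have hμ : 0 ≤ ∫ p in Icc 0 T ×ˢ s, F p.1 ∂μ :=
    setIntegral_nonneg (measurableSet_Icc.prod hs) fun p hp =>
      intervalIntegral.integral_nonneg hp.1.2 fun x _ => hf0 x
  have hF0 : F 0 ≤ ∫ t, f t :=
    (le_abs_self _).trans <| (norm_intervalIntegral_le_integral_norm hfi 0 T).trans_eq <|
      integral_congr_ae (ae_of_all _ fun t => Real.norm_of_nonneg (hf0 t))
  calc ∫ t in Icc 0 T, g t * f t ≤ c * F 0 := by linarith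
    _ ≤ c * ∫ t, f t := mul_le_mul_of_nonneg_left hF0 hc

theorem lp_constraint_time_only {T k θ δ : ℝ} {ν0 : Measure ℝ} {μ : Measure (ℝ × ℝ)}
    {m : ProbabilityTheory.Kernel ℝ ℝ}
    (hLP : ∀ u : ℝ → ℝ → ℝ,
      (∀ x, ContDiff ℝ 1 fun t => u t x) →
      (∀ t, ContDiff ℝ 2 (u t)) →
      (∃ C : ℝ, ∀ t x : ℝ, |u t x| ≤ C ∧ |deriv (fun s => u s x) t| ≤ C ∧
          |deriv (u t) x| ≤ C ∧ |deriv (deriv (u t)) x| ≤ C) →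
      (∫ x in Ici (0:ℝ), u 0 x ∂ν0)
        + (∫ t in Icc (0:ℝ) T, ∫ x in Ici (0:ℝ),
            (deriv (fun s => u s x) t + k * (θ - x) * deriv (u t) x
              + δ ^ 2 * x / 2 * deriv (deriv (u t)) x) ∂(m t))
        = ∫ p in Icc (0:ℝ) T ×ˢ Ici (0:ℝ), u p.1 p.2 ∂μ)
    (u : ℝ → ℝ) (hu : ContDiff ℝ 1 u) (hbound : ∃ C, ∀ t, |u t| ≤ C ∧ |deriv u t| ≤ C) :
    ν0.real (Ici 0) * u 0 + ∫ t in Icc 0 T, (m t).real (Ici 0) * deriv u t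
      = ∫ p in Icc 0 T ×ˢ Ici 0, u p.1 ∂μ := by
  obtain ⟨C, hC⟩ := hbound
  have hC0 : 0 ≤ C := (abs_nonneg _).trans (hC 0).1
  have := hLP (fun t _ => u t) (fun _ => hu) (fun _ => contDiff_const)
    ⟨C, fun t _ => ⟨(hC t).1, (hC t).2, by simpa using hC0, by simpa using hC0⟩⟩
  simpa only [deriv_const', mul_zero, add_zero, setIntegral_const, smul_eq_mul] using this

theorem stmt_10_general (T k θ δ : ℝ)
    (ν0 : Measure ℝ)
    (μ : Measure (ℝ × ℝ))
    (m : ProbabilityTheory.Kernel ℝ ℝ)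
    (hmint : ∫⁻ t in Icc (0:ℝ) T, ∫⁻ x in Ici (0:ℝ), ENNReal.ofReal (1 + x) ∂(m t) < ⊤)
    (hLP : ∀ u : ℝ → ℝ → ℝ,
      (∀ x, ContDiff ℝ 1 fun t => u t x) →
      (∀ t, ContDiff ℝ 2 (u t)) →
      (∃ C : ℝ, ∀ t x : ℝ, |u t x| ≤ C ∧ |deriv (fun s => u s x) t| ≤ C ∧
          |deriv (u t) x| ≤ C ∧ |deriv (deriv (u t)) x| ≤ C) →
      (∫ x in Ici (0:ℝ), u 0 x ∂ν0)
        + (∫ t in Icc (0:ℝ) T, ∫ x in Ici (0:ℝ),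
            (deriv (fun s => u s x) t + k * (θ - x) * deriv (u t) x
              + δ ^ 2 * x / 2 * deriv (deriv (u t)) x) ∂(m t))
        = ∫ p in Icc (0:ℝ) T ×ˢ Ici (0:ℝ), u p.1 p.2 ∂μ) :
    ∀ᵐ t ∂(volume.restrict (Icc (0:ℝ) T)), m t (Ici 0) ≤ ν0 (Ici 0) := by
  have hmass : ∫⁻ t in Icc 0 T, m t (Ici 0) < ⊤ :=
    (lintegral_mono fun t => measure_Ici_le_setLIntegral_one_add (m t)).trans_lt hmint
  have hmeas : Measurable fun t => m t (Ici 0) := m.measurable_coe measurableSet_Ici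
  have hint : IntegrableOn (fun t => (m t).real (Ici 0)) (Icc 0 T) :=
    integrable_toReal_of_lintegral_ne_top hmeas.aemeasurable hmass.ne
  have hle : ∀ᵐ t, (Icc 0 T).indicator (fun t => (m t).real (Ici 0)) t ≤ ν0.real (Ici 0) := by
    refine ae_le_of_integral_contDiff_mul_le
      ((integrable_indicator_iff measurableSet_Icc).2 hint).locallyIntegrable
      fun f hf hfc hf0 => ?_
    simp_rw [← indicator_mul_left, integral_indicator measurableSet_Icc]
    exact setIntegral_mul_le_of_forall_contDiff_eq measurableSet_Ici measureReal_nonneg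
      (lp_constraint_time_only hLP) hf.continuous hfc hf0
  filter_upwards [ae_restrict_of_ae hle, ae_lt_top hmeas hmass.ne,
    ae_restrict_mem measurableSet_Icc] with t hle hfin ht
  rw [indicator_of_mem ht] at hle
  exact (ENNReal.ofReal_toReal hfin.ne).symm.trans_le (ENNReal.ofReal_le_of_le_toReal hle)

/-- Mass bound from the linear programming constraint for the class of agents not yet
in the market, driven by the CIR generator `k(θ−x)∂_x + (δ²x/2)∂²_{xx}`:
`m̂_t(Ō) ≤ ν̂_0(Ō)` for almost every `t ∈ [0,T]`. -/
theorem stmt_10 (T k θ δ : ℝ) (hT : 0 < T) (hk : 0 < k) (hθ : 0 < θ) (hδ : 0 < δ)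
    (ν0 : Measure ℝ) [IsFiniteMeasure ν0]
    (μ : Measure (ℝ × ℝ)) [IsFiniteMeasure μ]
    (m : ProbabilityTheory.Kernel ℝ ℝ) (hmfin : ∀ t, IsFiniteMeasure (m t))
    (hmint : ∫⁻ t in Icc (0:ℝ) T, ∫⁻ x in Ici (0:ℝ), ENNReal.ofReal (1 + x) ∂(m t) < ⊤)
    (hLP : ∀ u : ℝ → ℝ → ℝ,
      (∀ x, ContDiff ℝ 1 fun t => u t x) →
      (∀ t, ContDiff ℝ 2 (u t)) →
      (∃ C : ℝ, ∀ t x : ℝ, |u t x| ≤ C ∧ |deriv (fun s => u s x) t| ≤ C ∧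
          |deriv (u t) x| ≤ C ∧ |deriv (deriv (u t)) x| ≤ C) →
      (∫ x in Ici (0:ℝ), u 0 x ∂ν0)
        + (∫ t in Icc (0:ℝ) T, ∫ x in Ici (0:ℝ),
            (deriv (fun s => u s x) t + k * (θ - x) * deriv (u t) x
              + δ ^ 2 * x / 2 * deriv (deriv (u t)) x) ∂(m t))
        = ∫ p in Icc (0:ℝ) T ×ˢ Ici (0:ℝ), u p.1 p.2 ∂μ) :
    ∀ᵐ t ∂(volume.restrict (Icc (0:ℝ) T)), m t (Ici 0) ≤ ν0 (Ici 0) :=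
  stmt_10_general T k θ δ ν0 μ m hmint hLP
end

section
/- Let K ≥ 1 be an integer, P* > 0, c_p, c_op > 0, d_p, d_op ≥ 0 be reals, H_1,…,H_K : ℝ² → ℝ be convex functions with H_k ≥ 0 for all k, G_0 : ℝ → ℝ a nonnegative m-strongly convex function, and Φ̄_1,…,Φ̄_K : ℝ → ℝ m-strongly convex functions satisfying Φ̄_k(r) ≥ (m/2)r² for all r ≥ 0. Define G : ℝ^(2+K) → ℝ by G(p,q,r_1,…,r_K) = Σ_{k=1}^K [c_p·H_k(p,r_k) + c_op·H_k(q,r_k)] + c_p·G_0(p) + c_op·G_0(q) − c_p·d_p·p − c_op·d_op·q + Σ_{k=1}^K Φ̄_k(r_k). Then the unique minimizer (p*, q*, r*) of G on [0,P*] × [0,P*] × [0,∞)^K satisfies, for every k, r*_k ≤ √(2·(G(0,0,…,0) + P*·(c_p·d_p + c_op·d_op))/m). -/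
/-!
The objective is the sum of a convex part (the gain terms) and a separable part in which each
coordinate enters through its own strictly convex function (`c G₀(p) - c d p` in each price, `Φ̄_k`
in `r_k`), so it is strictly convex and has at most one minimizer on the convex domain. On the
domain, nonnegativity of the `H_k`, of `G₀` and of the `Φ̄_j`, together with `p, q ≤ P*`, gives
`G ≥ m/2 · r_k² - P*(c_p d_p + c_op d_op)`. Hence every point of the domain with `G ≤ G(0)`
satisfies the claimed bound on `r_k`; this is the a priori bound, and it confines that sublevel set
to a compact box, which yields the existence of the minimizer.
-/

open Set

theorem StrictConvexOn.const_mul {𝕜 E : Type*} [CommSemiring 𝕜] [PartialOrder 𝕜]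
    [IsStrictOrderedRing 𝕜] [AddCommMonoid E] [SMul 𝕜 E] {s : Set E} {f : E → 𝕜} {c : 𝕜}
    (hc : 0 < c) (hf : StrictConvexOn 𝕜 s f) :
    StrictConvexOn 𝕜 s fun x => c * f x :=
  ⟨hf.1, fun x hx y hy hxy a b ha hb hab =>
    calc c * f (a • x + b • y) < c * (a * f x + b * f y) :=
          mul_lt_mul_of_pos_left (hf.2 hx hy hxy ha hb hab) hc
      _ = a * (c * f x) + b * (c * f y) := by ring⟩

section Convexity

variable {𝕜 E F β ι : Type*} [Semiring 𝕜] [PartialOrder 𝕜]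

theorem ConvexOn.sum [AddCommMonoid E] [SMul 𝕜 E] [AddCommMonoid β] [PartialOrder β]
    [IsOrderedAddMonoid β] [Module 𝕜 β] {s : Set E} (hs : Convex 𝕜 s) (t : Finset ι)
    {f : ι → E → β} (hf : ∀ i ∈ t, ConvexOn 𝕜 s (f i)) :
    ConvexOn 𝕜 s fun x => ∑ i ∈ t, f i x := by
  have h := Finset.sum_induction f (ConvexOn 𝕜 s) (fun _ _ => ConvexOn.add)
    (convexOn_const 0 hs) hf
  rwa [Finset.sum_fn] at h

variable [AddCommMonoid E] [AddCommMonoid F] [Module 𝕜 E] [Module 𝕜 F]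
  [AddCommMonoid β] [PartialOrder β] [IsOrderedCancelAddMonoid β] [Module 𝕜 β]

theorem StrictConvexOn.prod_add {s : Set E} {t : Set F} {f : E → β} {g : F → β}
    (hf : StrictConvexOn 𝕜 s f) (hg : StrictConvexOn 𝕜 t g) :
    StrictConvexOn 𝕜 (s ×ˢ t) fun x => f x.1 + g x.2 := by
  refine ⟨hf.1.prod hg.1, fun x hx y hy hxy a b ha hb hab => ?_⟩
  simp only [Prod.fst_add, Prod.snd_add, Prod.smul_fst, Prod.smul_snd, smul_add]
  rw [add_add_add_comm]
  obtain h | h := eq_or_ne x.1 y.1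
  · exact add_lt_add_of_le_of_lt (hf.convexOn.2 hx.1 hy.1 ha.le hb.le hab)
      (hg.2 hx.2 hy.2 (fun h' => hxy (Prod.ext h h')) ha hb hab)
  · exact add_lt_add_of_lt_of_le (hf.2 hx.1 hy.1 h ha hb hab)
      (hg.convexOn.2 hx.2 hy.2 ha.le hb.le hab)

theorem StrictConvexOn.pi_sum [Fintype ι] {E : ι → Type*} [∀ i, AddCommMonoid (E i)]
    [∀ i, Module 𝕜 (E i)] {s : ∀ i, Set (E i)} {f : ∀ i, E i → β}
    (hf : ∀ i, StrictConvexOn 𝕜 (s i) (f i)) :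
    StrictConvexOn 𝕜 (univ.pi s) fun x => ∑ i, f i (x i) := by
  refine ⟨convex_pi fun i _ => (hf i).1, fun x hx y hy hxy a b ha hb hab => ?_⟩
  obtain ⟨j, hj⟩ := Function.ne_iff.1 hxy
  simp only [Finset.smul_sum, ← Finset.sum_add_distrib, Pi.add_apply, Pi.smul_apply]
  refine Finset.sum_lt_sum (fun i _ => (hf i).convexOn.2 (hx i trivial) (hy i trivial)
    ha.le hb.le hab) ⟨j, Finset.mem_univ j, (hf j).2 (hx j trivial) (hy j trivial) hj ha hb hab⟩

end Convexity

theorem StrictConvexOn.existsUnique_isMinOn {E : Type*} [TopologicalSpace E] [AddCommGroup E]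
    [Module ℝ E] {s t : Set E} {f : E → ℝ} (hf : StrictConvexOn ℝ s f) (hs : IsClosed s)
    (hcont : ContinuousOn f s) {x₀ : E} (hx₀ : x₀ ∈ s) (ht : IsCompact t)
    (hcoercive : ∀ x ∈ s \ t, f x₀ ≤ f x) :
    ∃! x, x ∈ s ∧ IsMinOn f s x := by
  obtain ⟨x, hxs, hx⟩ := hcont.exists_isMinOn' hs hx₀ <| by
    rw [Filter.eventually_inf_principal]
    filter_upwards [ht.compl_mem_cocompact] with y hyt hys using hcoercive y ⟨hys, hyt⟩
  exact ⟨x, ⟨hxs, hx⟩, fun y hy => hf.eq_of_isMinOn hy.2 hx hy.1 hxs⟩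

theorem le_sqrt_two_mul_div_of_half_mul_sq_le {m c r : ℝ} (hm : 0 < m)
    (h : m / 2 * r ^ 2 ≤ c) : r ≤ √(2 * c / m) :=
  Real.le_sqrt_of_sq_le <| by rw [le_div_iff₀ hm]; linarith

section PriceObjective

variable {K : ℕ}

def priceDomain (Pstar : ℝ) (K : ℕ) : Set (ℝ × ℝ × (Fin K → ℝ)) :=
  Icc 0 Pstar ×ˢ Icc 0 Pstar ×ˢ {r : Fin K → ℝ | ∀ k, 0 ≤ r k}

noncomputable def priceObjective (cp cop dp dop : ℝ) (H : Fin K → ℝ × ℝ → ℝ) (G0 : ℝ → ℝ)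
    (Phi : Fin K → ℝ → ℝ) (z : ℝ × ℝ × (Fin K → ℝ)) : ℝ :=
  (∑ k, (cp * H k (z.1, z.2.2 k) + cop * H k (z.2.1, z.2.2 k)))
    + cp * G0 z.1 + cop * G0 z.2.1 - cp * dp * z.1 - cop * dop * z.2.1
    + ∑ k, Phi k (z.2.2 k)

theorem isClosed_priceDomain (Pstar : ℝ) : IsClosed (priceDomain Pstar K) :=
  isClosed_Icc.prod (isClosed_Icc.prod (isClosed_Ici (a := (0 : Fin K → ℝ))))

theorem convex_priceDomain (Pstar : ℝ) : Convex ℝ (priceDomain Pstar K) :=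
  (convex_Icc 0 Pstar).prod ((convex_Icc 0 Pstar).prod (convex_Ici (0 : Fin K → ℝ)))

theorem zero_mem_priceDomain {Pstar : ℝ} (hPstar : 0 ≤ Pstar) :
    ((0, 0, fun _ => 0) : ℝ × ℝ × (Fin K → ℝ)) ∈ priceDomain Pstar K :=
  ⟨⟨le_rfl, hPstar⟩, ⟨le_rfl, hPstar⟩, fun _ => le_rfl⟩

theorem strictConvexOn_priceObjective {cp cop m : ℝ} (dp dop : ℝ) {H : Fin K → ℝ × ℝ → ℝ}
    {G0 : ℝ → ℝ} {Phi : Fin K → ℝ → ℝ} (hcp : 0 < cp) (hcop : 0 < cop) (hm : 0 < m)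
    (hH : ∀ k, ConvexOn ℝ univ (H k)) (hG0 : StrongConvexOn univ m G0)
    (hPhi : ∀ k, StrongConvexOn univ m (Phi k)) :
    StrictConvexOn ℝ univ (priceObjective cp cop dp dop H G0 Phi) := by
  have hgain (π : (ℝ × ℝ × (Fin K → ℝ)) →ₗ[ℝ] ℝ) (k : Fin K) :
      ConvexOn ℝ univ fun z => H k (π z, z.2.2 k) := by
    have h := (hH k).comp_linearMap (π.prod (LinearMap.proj k ∘ₗ LinearMap.snd ℝ ℝ _ ∘ₗ
      LinearMap.snd ℝ ℝ _))
    rwa [preimage_univ] at h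
  have hgains : ConvexOn ℝ univ fun z : ℝ × ℝ × (Fin K → ℝ) =>
      ∑ k, (cp * H k (z.1, z.2.2 k) + cop * H k (z.2.1, z.2.2 k)) :=
    ConvexOn.sum convex_univ _ fun k _ => ((hgain (LinearMap.fst ℝ ℝ _) k).smul hcp.le).add
      ((hgain (LinearMap.fst ℝ ℝ _ ∘ₗ LinearMap.snd ℝ ℝ _) k).smul hcop.le)
  have hbaseline {c : ℝ} (e : ℝ) (hc : 0 < c) :
      StrictConvexOn ℝ univ fun x => c * G0 x - e * x :=
    ((hG0.strictConvexOn hm).const_mul hc).sub_concaveOn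
      ((LinearMap.mul ℝ ℝ e).concaveOn convex_univ)
  have hseparable : StrictConvexOn ℝ univ fun z : ℝ × ℝ × (Fin K → ℝ) =>
      (cp * G0 z.1 - cp * dp * z.1)
        + ((cop * G0 z.2.1 - cop * dop * z.2.1) + ∑ k, Phi k (z.2.2 k)) := by
    have h := (hbaseline (cp * dp) hcp).prod_add ((hbaseline (cop * dop) hcop).prod_add
      (StrictConvexOn.pi_sum fun k => (hPhi k).strictConvexOn hm))
    rwa [pi_univ, univ_prod_univ, univ_prod_univ] at h
  refine (hgains.add_strictConvexOn hseparable).congr fun z _ => ?_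
  simp only [priceObjective, Pi.add_apply]
  ring

theorem half_mul_sq_sub_le_priceObjective {Pstar cp cop dp dop m : ℝ}
    {H : Fin K → ℝ × ℝ → ℝ} {G0 : ℝ → ℝ} {Phi : Fin K → ℝ → ℝ} (hcp : 0 ≤ cp) (hcop : 0 ≤ cop)
    (hdp : 0 ≤ dp) (hdop : 0 ≤ dop) (hm : 0 ≤ m) (hHpos : ∀ k p, 0 ≤ H k p)
    (hG0pos : ∀ x, 0 ≤ G0 x) (hPhiLB : ∀ k, ∀ r : ℝ, 0 ≤ r → m / 2 * r ^ 2 ≤ Phi k r)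
    {z : ℝ × ℝ × (Fin K → ℝ)} (hz : z ∈ priceDomain Pstar K) (k : Fin K) :
    m / 2 * z.2.2 k ^ 2 - Pstar * (cp * dp + cop * dop)
      ≤ priceObjective cp cop dp dop H G0 Phi z := by
  obtain ⟨⟨-, hp⟩, ⟨-, hq⟩, hr⟩ := hz
  have hgains : 0 ≤ ∑ j, (cp * H j (z.1, z.2.2 j) + cop * H j (z.2.1, z.2.2 j)) :=
    Finset.sum_nonneg fun j _ =>
      add_nonneg (mul_nonneg hcp (hHpos _ _)) (mul_nonneg hcop (hHpos _ _))
  have hfuel : m / 2 * z.2.2 k ^ 2 ≤ ∑ j, Phi j (z.2.2 j) :=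
    (hPhiLB k _ (hr k)).trans <| Finset.single_le_sum
      (fun j _ => (by positivity : 0 ≤ m / 2 * z.2.2 j ^ 2).trans (hPhiLB j _ (hr j)))
      (Finset.mem_univ k)
  have hpeak : cp * dp * z.1 ≤ cp * dp * Pstar := by gcongr
  have hoffpeak : cop * dop * z.2.1 ≤ cop * dop * Pstar := by gcongr
  have hbase_p := mul_nonneg hcp (hG0pos z.1)
  have hbase_q := mul_nonneg hcop (hG0pos z.2.1)
  simp only [priceObjective]
  linarith

end PriceObjective

theorem stmt_13_general (K : ℕ) (Pstar cp cop dp dop m : ℝ)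
    (hPstar : 0 < Pstar) (hcp : 0 < cp) (hcop : 0 < cop)
    (hdp : 0 ≤ dp) (hdop : 0 ≤ dop) (hm : 0 < m)
    (H : Fin K → ℝ × ℝ → ℝ) (hH : ∀ k, ConvexOn ℝ Set.univ (H k))
    (hHpos : ∀ k p, 0 ≤ H k p)
    (G0 : ℝ → ℝ) (hG0 : StrongConvexOn Set.univ m G0) (hG0pos : ∀ x, 0 ≤ G0 x)
    (Phi : Fin K → ℝ → ℝ) (hPhi : ∀ k, StrongConvexOn Set.univ m (Phi k))
    (hPhiLB : ∀ k, ∀ r : ℝ, 0 ≤ r → m / 2 * r ^ 2 ≤ Phi k r)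
    (G : ℝ × ℝ × (Fin K → ℝ) → ℝ)
    (hG : ∀ z : ℝ × ℝ × (Fin K → ℝ),
      G z = (∑ k, (cp * H k (z.1, z.2.2 k) + cop * H k (z.2.1, z.2.2 k)))
        + cp * G0 z.1 + cop * G0 z.2.1 - cp * dp * z.1 - cop * dop * z.2.1
        + ∑ k, Phi k (z.2.2 k))
    (S : Set (ℝ × ℝ × (Fin K → ℝ)))
    (hS : S = Icc 0 Pstar ×ˢ Icc 0 Pstar ×ˢ {r : Fin K → ℝ | ∀ k, 0 ≤ r k}) :
    (∃! z, z ∈ S ∧ IsMinOn G S z) ∧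
    ∀ z, z ∈ S → IsMinOn G S z → ∀ k,
      z.2.2 k ≤ Real.sqrt
        (2 * (G (0, 0, fun _ => 0) + Pstar * (cp * dp + cop * dop)) / m) := by
  obtain rfl : G = priceObjective cp cop dp dop H G0 Phi := funext hG
  obtain rfl : S = priceDomain Pstar K := hS
  set G := priceObjective cp cop dp dop H G0 Phi
  set bound := √(2 * (G (0, 0, fun _ => 0) + Pstar * (cp * dp + cop * dop)) / m)
  have h0 := zero_mem_priceDomain (K := K) hPstar.le
  have hsublevel : ∀ z ∈ priceDomain Pstar K, G z ≤ G (0, 0, fun _ => 0) → ∀ k, z.2.2 k ≤ bound :=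
    fun z hz hle k => le_sqrt_two_mul_div_of_half_mul_sq_le hm <| by
      linarith [half_mul_sq_sub_le_priceObjective hcp.le hcop.le hdp hdop hm.le hHpos hG0pos
        hPhiLB hz k]
  have hbox : IsCompact (Icc 0 Pstar ×ˢ Icc 0 Pstar ×ˢ Icc (0 : Fin K → ℝ) fun _ => bound) :=
    isCompact_Icc.prod (isCompact_Icc.prod isCompact_Icc)
  have hconvex := strictConvexOn_priceObjective dp dop hcp hcop hm hH hG0 hPhi
  refine ⟨(hconvex.subset (subset_univ _) (convex_priceDomain Pstar)).existsUnique_isMinOn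
      (isClosed_priceDomain Pstar) ((hconvex.convexOn.continuousOn isOpen_univ).mono
      (subset_univ _)) h0 hbox fun z ⟨hz, hzbox⟩ => ?_,
    fun z hz hmin => hsublevel z hz (isMinOn_iff.1 hmin _ h0)⟩
  by_contra! hlt
  exact hzbox ⟨hz.1, hz.2.1, hz.2.2, fun k => hsublevel z hz hlt.le k⟩

/-- A priori bound on the fuel-price components of the unique minimizer of the
electricity/fuel price objective on `[0,P*] × [0,P*] × [0,∞)^K`. -/
theorem stmt_13 (K : ℕ) (hK : 1 ≤ K) (Pstar cp cop dp dop m : ℝ)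
    (hPstar : 0 < Pstar) (hcp : 0 < cp) (hcop : 0 < cop)
    (hdp : 0 ≤ dp) (hdop : 0 ≤ dop) (hm : 0 < m)
    (H : Fin K → ℝ × ℝ → ℝ) (hH : ∀ k, ConvexOn ℝ Set.univ (H k))
    (hHpos : ∀ k p, 0 ≤ H k p)
    (G0 : ℝ → ℝ) (hG0 : StrongConvexOn Set.univ m G0) (hG0pos : ∀ x, 0 ≤ G0 x)
    (Phi : Fin K → ℝ → ℝ) (hPhi : ∀ k, StrongConvexOn Set.univ m (Phi k))
    (hPhiLB : ∀ k, ∀ r : ℝ, 0 ≤ r → m / 2 * r ^ 2 ≤ Phi k r)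
    (G : ℝ × ℝ × (Fin K → ℝ) → ℝ)
    (hG : ∀ z : ℝ × ℝ × (Fin K → ℝ),
      G z = (∑ k, (cp * H k (z.1, z.2.2 k) + cop * H k (z.2.1, z.2.2 k)))
        + cp * G0 z.1 + cop * G0 z.2.1 - cp * dp * z.1 - cop * dop * z.2.1
        + ∑ k, Phi k (z.2.2 k))
    (S : Set (ℝ × ℝ × (Fin K → ℝ)))
    (hS : S = Icc 0 Pstar ×ˢ Icc 0 Pstar ×ˢ {r : Fin K → ℝ | ∀ k, 0 ≤ r k}) :
    (∃! z, z ∈ S ∧ IsMinOn G S z) ∧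
    ∀ z, z ∈ S → IsMinOn G S z → ∀ k,
      z.2.2 k ≤ Real.sqrt
        (2 * (G (0, 0, fun _ => 0) + Pstar * (cp * dp + cop * dop)) / m) :=
  stmt_13_general K Pstar cp cop dp dop m hPstar hcp hcop hdp hdop hm H hH hHpos G0 hG0 hG0pos Phi
    hPhi hPhiLB G hG S hS
end
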